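/- If the maximum total bid achievable in the α-section of capacity C_α can be made arbitrarily smaller than OPT, then CoF_BZ = OPT/u_BZ is unbounded: for every R > 0 there is an instance (with a single transaction of bid b and size s > C_α, and filler transactions) where OPT/u_BZ > R. -/
import Mathlib


/-- The best total fee collectible from transactions with bids `b` and sizes
`s` within capacity `cap`. -/
noncomputable def bestFee (n : ℕ) (b s : Fin n → ℝ) (cap : ℝ) : ℝ :=
  sSup {v : ℝ | ∃ T : Finset (Fin n), ∑ i ∈ T, s i ≤ cap ∧ v = ∑ i ∈ T, b i}

/-- Unbounded cost of fairness of BitcoinZF with heterogeneous sizes: for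
every `R > 0` there is an instance — containing a transaction whose size
exceeds the α-section capacity `Cα` — in which `OPT / u_BZ > R`. -/
theorem stmt_16 :
    ∀ R : ℝ, 0 < R →
      ∃ (n : ℕ) (b s : Fin n → ℝ) (C Cα : ℝ),
        0 < Cα ∧ Cα < C ∧ (∀ i, 0 ≤ b i) ∧ (∀ i, 0 < s i) ∧
        (∃ i, Cα < s i ∧ ∀ j, b j ≤ b i) ∧
        0 < bestFee n b s Cα ∧
        R < bestFee n b s C / bestFee n b s Cα := by
  intro R hR
  refine ⟨2, ![R + 1, 1], ![2, 1], 3, 1, one_pos, by norm_num, ?_, ?_, ?_, ?_, ?_⟩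
  · intro i; fin_cases i <;> simp <;> linarith
  · intro i; fin_cases i <;> norm_num
  · exact ⟨0, by norm_num, fun j => by fin_cases j <;> simp <;> linarith⟩
  · have h1 : bestFee 2 ![R + 1, 1] ![2, 1] 1 = 1 := by
      apply IsGreatest.csSup_eq
      constructor
      · exact ⟨{1}, by norm_num, by norm_num⟩
      · rintro v ⟨T, hT, rfl⟩
        by_cases h0 : (0 : Fin 2) ∈ T
        · exfalso
          have := Finset.single_le_sum (f := fun i => (![2, 1] : Fin 2 → ℝ) i)
            (fun i _ => by fin_cases i <;> norm_num) h0
          simp at this; linarith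
        · have hsub : T ⊆ {1} := by
            intro x hx; fin_cases x
            · exact absurd hx h0
            · simp
          calc ∑ i ∈ T, (![R + 1, 1] : Fin 2 → ℝ) i
              ≤ ∑ i ∈ ({1} : Finset (Fin 2)), (![R + 1, 1] : Fin 2 → ℝ) i := by
                apply Finset.sum_le_sum_of_subset_of_nonneg hsub
                intro i _ _; fin_cases i <;> simp <;> linarith
            _ = 1 := by norm_num
    rw [h1]; norm_num
  · have h1 : bestFee 2 ![R + 1, 1] ![2, 1] 1 = 1 := by
      apply IsGreatest.csSup_eq
      constructor
      · exact ⟨{1}, by norm_num, by norm_num⟩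
      · rintro v ⟨T, hT, rfl⟩
        by_cases h0 : (0 : Fin 2) ∈ T
        · exfalso
          have := Finset.single_le_sum (f := fun i => (![2, 1] : Fin 2 → ℝ) i)
            (fun i _ => by fin_cases i <;> norm_num) h0
          simp at this; linarith
        · have hsub : T ⊆ {1} := by
            intro x hx; fin_cases x
            · exact absurd hx h0
            · simp
          calc ∑ i ∈ T, (![R + 1, 1] : Fin 2 → ℝ) i
              ≤ ∑ i ∈ ({1} : Finset (Fin 2)), (![R + 1, 1] : Fin 2 → ℝ) i := by
                apply Finset.sum_le_sum_of_subset_of_nonneg hsub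
                intro i _ _; fin_cases i <;> simp <;> linarith
            _ = 1 := by norm_num
    have h2 : bestFee 2 ![R + 1, 1] ![2, 1] 3 = R + 2 := by
      apply IsGreatest.csSup_eq
      constructor
      · refine ⟨Finset.univ, ?_, ?_⟩
        · simp [Fin.sum_univ_two]; norm_num
        · simp [Fin.sum_univ_two]; ring
      · rintro v ⟨T, hT, rfl⟩
        calc ∑ i ∈ T, (![R + 1, 1] : Fin 2 → ℝ) i
            ≤ ∑ i ∈ (Finset.univ : Finset (Fin 2)), (![R + 1, 1] : Fin 2 → ℝ) i := by
              apply Finset.sum_le_sum_of_subset_of_nonneg (Finset.subset_univ T)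
              intro i _ _; fin_cases i <;> simp <;> linarith
          _ = R + 2 := by simp [Fin.sum_univ_two]; ring
    rw [h1, h2]; rw [div_one]; linarith
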